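/- arXiv:1907.12312 — 5 statements merged into one kernel-verified Lean document; each statement's English description precedes it below -/
import Mathlib

section
/- Let P ⊂ ℝ^3 be a lattice parallelepiped and let T ⊆ P be a tetrahedron. Then at least one of the four corner tetrahedra T_i of the circumscribed parallelepiped C(T) is fully contained in P. -/
open scoped Pointwise

noncomputable section

/-- The real point corresponding to an integer point of `ℤ³`. -/
def toR3 (v : Fin 3 → ℤ) : Fin 3 → ℝ := fun i => (v i : ℝ)

/-- The lattice parallelepiped `{v + λ₁a₁ + λ₂a₂ + λ₃a₃ : λᵢ ∈ [0,1]}`. -/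
def Parallelepiped3 (v a₁ a₂ a₃ : Fin 3 → ℤ) : Set (Fin 3 → ℝ) :=
  {x | ∃ l₁ l₂ l₃ : ℝ, l₁ ∈ Set.Icc (0:ℝ) 1 ∧ l₂ ∈ Set.Icc (0:ℝ) 1 ∧
    l₃ ∈ Set.Icc (0:ℝ) 1 ∧
    x = toR3 v + l₁ • toR3 a₁ + l₂ • toR3 a₂ + l₃ • toR3 a₃}

/-- The vertex `qᵢ = (p₁+p₂+p₃+p₄)/2 − pᵢ` of the circumscribed parallelepiped. -/
def oppVert (p : Fin 4 → Fin 3 → ℝ) (i : Fin 4) : Fin 3 → ℝ :=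
  (1/2 : ℝ) • (p 0 + p 1 + p 2 + p 3) - p i

/-- The corner tetrahedron `Tᵢ = conv(qᵢ, pⱼ, pₖ, pₗ)` for `{i,j,k,l} = {1,2,3,4}`. -/
def cornerTet (p : Fin 4 → Fin 3 → ℝ) (i : Fin 4) : Set (Fin 3 → ℝ) :=
  convexHull ℝ ({oppVert p i} ∪ p '' {j | j ≠ i})

/-- A lattice parallelepiped is convex. -/
lemma convex_parallelepiped3 (v a₁ a₂ a₃ : Fin 3 → ℤ) :
    Convex ℝ (Parallelepiped3 v a₁ a₂ a₃) := by
  rintro x ⟨l1, l2, l3, h1, h2, h3, rfl⟩ y ⟨m1, m2, m3, g1, g2, g3, rfl⟩ a b ha hb hab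
  obtain rfl : b = 1 - a := by linarith
  refine ⟨a * l1 + (1-a) * m1, a * l2 + (1-a) * m2, a * l3 + (1-a) * m3, ?_, ?_, ?_, ?_⟩
  · have := (convex_Icc (0:ℝ) 1) h1 g1 ha hb hab; simpa [smul_eq_mul] using this
  · have := (convex_Icc (0:ℝ) 1) h2 g2 ha hb hab; simpa [smul_eq_mul] using this
  · have := (convex_Icc (0:ℝ) 1) h3 g3 ha hb hab; simpa [smul_eq_mul] using this
  · module

/-- At most one of the four numbers `lᵢ` can fail `s/2 - lᵢ ∈ [0,1]`. -/
lemma bad_index_unique (l : Fin 4 → ℝ) (hl : ∀ k, 0 ≤ l k ∧ l k ≤ 1) (i j : Fin 4)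
    (hij : i ≠ j)
    (hi : ¬ ((l 0 + l 1 + l 2 + l 3)/2 - l i ∈ Set.Icc (0:ℝ) 1))
    (hj : ¬ ((l 0 + l 1 + l 2 + l 3)/2 - l j ∈ Set.Icc (0:ℝ) 1)) : False := by
  simp only [Set.mem_Icc, not_and_or, not_le] at hi hj
  have b0 := hl 0; have b1 := hl 1; have b2 := hl 2; have b3 := hl 3
  fin_cases i <;> fin_cases j <;> simp only [Fin.isValue, Fin.mk_zero, Fin.mk_one,
      show (⟨2, by norm_num⟩ : Fin 4) = 2 from rfl, show (⟨3, by norm_num⟩ : Fin 4) = 3 from rfl]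
      at hi hj hij <;>
    first
      | exact absurd rfl hij
      | (rcases hi with hi | hi <;> rcases hj with hj | hj <;> linarith)

/-- Pigeonhole: there is an index good in all three coordinates. -/
lemma exists_good_index (l1 l2 l3 : Fin 4 → ℝ)
    (h1 : ∀ k, 0 ≤ l1 k ∧ l1 k ≤ 1) (h2 : ∀ k, 0 ≤ l2 k ∧ l2 k ≤ 1)
    (h3 : ∀ k, 0 ≤ l3 k ∧ l3 k ≤ 1) :
    ∃ i : Fin 4,
      (l1 0 + l1 1 + l1 2 + l1 3)/2 - l1 i ∈ Set.Icc (0:ℝ) 1 ∧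
      (l2 0 + l2 1 + l2 2 + l2 3)/2 - l2 i ∈ Set.Icc (0:ℝ) 1 ∧
      (l3 0 + l3 1 + l3 2 + l3 3)/2 - l3 i ∈ Set.Icc (0:ℝ) 1 := by
  classical
  let bad : (Fin 4 → ℝ) → Fin 4 → Prop :=
    fun l i => ¬ ((l 0 + l 1 + l 2 + l 3)/2 - l i ∈ Set.Icc (0:ℝ) 1)
  let b : (Fin 4 → ℝ) → Fin 4 := fun l => if h : ∃ j, bad l j then h.choose else 0
  have hb : ∀ (l : Fin 4 → ℝ), (∀ k, 0 ≤ l k ∧ l k ≤ 1) → ∀ i, i ≠ b l → ¬ bad l i := by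
    intro l hl i hi hbad
    have hex : ∃ j, bad l j := ⟨i, hbad⟩
    have : b l = hex.choose := by simp [b, hex]
    exact bad_index_unique l hl i (b l) hi hbad (this ▸ hex.choose_spec)
  obtain ⟨i, hi1, hi2, hi3⟩ : ∃ i : Fin 4, i ≠ b l1 ∧ i ≠ b l2 ∧ i ≠ b l3 := by
    have : ∀ x y z : Fin 4, ∃ i : Fin 4, i ≠ x ∧ i ≠ y ∧ i ≠ z := by decide
    exact this _ _ _
  exact ⟨i, not_not.mp (hb l1 h1 i hi1), not_not.mp (hb l2 h2 i hi2),
    not_not.mp (hb l3 h3 i hi3)⟩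

/-- If a tetrahedron `T` is contained in a lattice parallelepiped `P`, then at
least one of the four corner tetrahedra of the circumscribed parallelepiped
`C(T)` is fully contained in `P`. -/
theorem corner_tet_in_parallelepiped
    (v a₁ a₂ a₃ : Fin 3 → ℤ)
    (h : LinearIndependent ℝ ![toR3 a₁, toR3 a₂, toR3 a₃])
    (p : Fin 4 → Fin 3 → ℝ) (hp : AffineIndependent ℝ p)
    (hT : convexHull ℝ (Set.range p) ⊆ Parallelepiped3 v a₁ a₂ a₃) :
    ∃ i, cornerTet p i ⊆ Parallelepiped3 v a₁ a₂ a₃ := by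
  have hmem : ∀ i : Fin 4, p i ∈ Parallelepiped3 v a₁ a₂ a₃ := fun i =>
    hT (subset_convexHull ℝ _ (Set.mem_range_self i))
  choose l1 l2 l3 hl1 hl2 hl3 heq using hmem
  have hl1' : ∀ k, 0 ≤ l1 k ∧ l1 k ≤ 1 := fun k => Set.mem_Icc.mp (hl1 k)
  have hl2' : ∀ k, 0 ≤ l2 k ∧ l2 k ≤ 1 := fun k => Set.mem_Icc.mp (hl2 k)
  have hl3' : ∀ k, 0 ≤ l3 k ∧ l3 k ≤ 1 := fun k => Set.mem_Icc.mp (hl3 k)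
  obtain ⟨i, hg1, hg2, hg3⟩ := exists_good_index l1 l2 l3 hl1' hl2' hl3'
  refine ⟨i, ?_⟩
  have hq : oppVert p i ∈ Parallelepiped3 v a₁ a₂ a₃ := by
    refine ⟨(l1 0 + l1 1 + l1 2 + l1 3)/2 - l1 i, (l2 0 + l2 1 + l2 2 + l2 3)/2 - l2 i,
      (l3 0 + l3 1 + l3 2 + l3 3)/2 - l3 i, hg1, hg2, hg3, ?_⟩
    have e0 := heq 0; have e1 := heq 1; have e2 := heq 2; have e3 := heq 3
    have ei := heq i
    rw [oppVert, e0, e1, e2, e3, ei]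
    module
  refine (convexHull_min ?_ (convex_parallelepiped3 v a₁ a₂ a₃))
  rintro x (rfl | ⟨j, -, rfl⟩)
  · exact hq
  · exact ⟨l1 j, l2 j, l3 j, hl1 j, hl2 j, hl3 j, heq j⟩
end
end

section
/- Let T ⊂ ℝ^3 be a tetrahedron with vertices p1, p2, p3, p4 and let q_i = (p1+p2+p3+p4)/2 − p_i for i ∈ {1,2,3,4}. If B = f^{-1}([α,β]) is a band (with f : ℝ^3 → ℝ a linear functional and α ≤ β reals) containing T, then B contains at least three of the four points q1, q2, q3, q4. -/
noncomputable section

/-- If a band `B = f⁻¹([α,β])` contains a tetrahedron `T = conv(p₁,p₂,p₃,p₄)`,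
then `B` contains at least three of the four points `q₁, q₂, q₃, q₄`. -/
theorem band_contains_three_opposite_vertices
    (p : Fin 4 → Fin 3 → ℝ) (hp : AffineIndependent ℝ p)
    (f : (Fin 3 → ℝ) →ₗ[ℝ] ℝ) (α β : ℝ) (hαβ : α ≤ β)
    (hT : convexHull ℝ (Set.range p) ⊆ f ⁻¹' Set.Icc α β) :
    ∃ i : Fin 4, ∀ j, j ≠ i → oppVert p j ∈ f ⁻¹' Set.Icc α β := by
  have ha : ∀ i, f (p i) ∈ Set.Icc α β := fun i =>
    hT (subset_convexHull ℝ _ ⟨i, rfl⟩)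
  have hq : ∀ j, f (oppVert p j)
      = (1/2) * (f (p 0) + f (p 1) + f (p 2) + f (p 3)) - f (p j) := by
    intro j
    simp [oppVert, map_sub, map_smul, map_add, smul_eq_mul]
    ring
  by_cases h : ∀ j, f (oppVert p j) ∈ Set.Icc α β
  · exact ⟨0, fun j _ => h j⟩
  · push_neg at h
    obtain ⟨i, hi⟩ := h
    refine ⟨i, fun j hj => ?_⟩
    by_contra hjq
    have h0 := ha 0; have h1 := ha 1; have h2 := ha 2; have h3 := ha 3
    rw [Set.mem_preimage] at hjq
    rw [hq i] at hi
    rw [hq j] at hjq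
    simp only [Set.mem_Icc, not_and_or, not_le] at hi hjq h0 h1 h2 h3
    obtain ⟨l0, r0⟩ := h0
    obtain ⟨l1, r1⟩ := h1
    obtain ⟨l2, r2⟩ := h2
    obtain ⟨l3, r3⟩ := h3
    fin_cases i <;> fin_cases j <;>
      first
        | exact absurd rfl hj
        | (simp only [Fin.mk_zero, Fin.mk_one, Fin.isValue, show ((⟨2, by omega⟩ : Fin 4)) = 2 from rfl, show ((⟨3, by omega⟩ : Fin 4)) = 3 from rfl] at hi hjq; rcases hi with h|h <;> rcases hjq with h'|h' <;> linarith)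
end
end

section
/- Let T ⊂ ℝ^3 be a tetrahedron with vertices p1, p2, p3, p4, let q_i = (p1+p2+p3+p4)/2 − p_i, let C(T) = conv(p1,…,p4,q1,…,q4), and let T_i = conv(q_i, p_j, p_k, p_l) for {i,j,k,l} = {1,2,3,4} be the corner tetrahedra. Then C(T) is the union of T and the four corner tetrahedra: C(T) = T ∪ T_1 ∪ T_2 ∪ T_3 ∪ T_4. -/
noncomputable section

/-!
In barycentric coordinates `w` with respect to the affine basis `p`, the vertex `qⱼ` has
coordinates `1/2 - δᵢⱼ`, so every vertex of `C(T)`, and hence every point of `C(T)`, satisfies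
`wᵢ + wⱼ ≥ 0` for `i ≠ j`. A point with all `wᵢ ≥ 0` lies in `T`. Otherwise some `wᵢ < 0`, and
`x = (-2 wᵢ) qᵢ + ∑_{j ≠ i} (wⱼ + wᵢ) pⱼ` exhibits `x` as a convex combination of the vertices
of `Tᵢ`.
-/

open Finset

lemma sum_smul_eq_oppVert_add (p : Fin 4 → Fin 3 → ℝ) (w : Fin 4 → ℝ) (i : Fin 4) :
    ∑ j, w j • p j = (-2 * w i) • oppVert p i + ∑ j ∈ univ.erase i, (w j + w i) • p j := by
  simp only [add_smul, sum_add_distrib, ← smul_sum, sum_erase_eq_sub (mem_univ i), oppVert,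
    Fin.sum_univ_four]
  module

lemma sum_smul_mem_cornerTet (p : Fin 4 → Fin 3 → ℝ) {w : Fin 4 → ℝ} (hw : ∑ j, w j = 1)
    {i : Fin 4} (hi : w i ≤ 0) (hij : ∀ j ≠ i, 0 ≤ w j + w i) :
    ∑ j, w j • p j ∈ cornerTet p i := by
  set v : Fin 4 → ℝ := fun j => if j = i then -2 * w i else w j + w i
  set z : Fin 4 → Fin 3 → ℝ := fun j => if j = i then oppVert p i else p j
  have sum_split_at_i {M : Type} [AddCommMonoid M] (f : Fin 4 → ℝ → (Fin 3 → ℝ) → M) :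
      ∑ j, f j (v j) (z j) =
        f i (-2 * w i) (oppVert p i) + ∑ j ∈ univ.erase i, f j (w j + w i) (p j) := by
    rw [← add_sum_erase _ _ (mem_univ i)]
    congr 1
    · simp [v, z]
    · exact sum_congr rfl fun j hj => by simp [v, z, ne_of_mem_erase hj]
  have hv : ∀ j ∈ univ, 0 ≤ v j := by
    intro j _
    by_cases h : j = i
    · simp only [v, h, if_true]; linarith
    · simp only [v, h, if_false]; exact hij j h
  have hv1 : ∑ j, v j = 1 := by
    rw [sum_split_at_i fun _ a _ => a, sum_add_distrib, sum_const, card_erase_of_mem (mem_univ i),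
      ← hw, ← add_sum_erase _ _ (mem_univ i)]
    simp only [card_univ, Fintype.card_fin, nsmul_eq_mul]
    ring
  have hz : ∀ j ∈ univ, z j ∈ ({oppVert p i} ∪ p '' {j | j ≠ i} : Set (Fin 3 → ℝ)) := by
    intro j _
    by_cases h : j = i
    · simp [z, h]
    · exact Or.inr ⟨j, h, by simp [z, h]⟩
  have hmem := (convex_convexHull ℝ _).sum_mem hv hv1 fun j hj => subset_convexHull ℝ _ (hz j hj)
  rwa [sum_split_at_i fun _ a x => a • x, ← sum_smul_eq_oppVert_add] at hmem

section AffineBasis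

variable (b : AffineBasis (Fin 4) ℝ (Fin 3 → ℝ))

lemma coord_oppVert (i j : Fin 4) :
    b.coord i (oppVert b j) = 1 / 2 - if i = j then 1 else 0 := by
  have hsum : ∑ k : Fin 4, ((1 : ℝ) / 2 - if k = j then 1 else 0) = 1 := by
    rw [sum_sub_distrib, sum_ite_eq']
    norm_num
  have hcomb :
      oppVert b j = univ.affineCombination ℝ b (fun k => 1 / 2 - if k = j then 1 else 0) := by
    rw [univ.affineCombination_eq_linear_combination _ _ hsum]
    simp only [sub_smul, ite_smul, one_smul, zero_smul, sum_sub_distrib, sum_ite_eq', mem_univ,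
      if_true, ← smul_sum, oppVert, Fin.sum_univ_four]
  rw [hcomb, b.coord_apply_combination_of_mem (mem_univ i) hsum]

lemma coord_add_coord_nonneg_of_mem_convexHull {x : Fin 3 → ℝ}
    (hx : x ∈ convexHull ℝ (Set.range b ∪ Set.range (oppVert b))) {i j : Fin 4} (hij : i ≠ j) :
    0 ≤ b.coord i x + b.coord j x := by
  have hconv : Convex ℝ {x | 0 ≤ (b.coord i + b.coord j) x} :=
    (convex_Ici (0 : ℝ)).affine_preimage _
  refine convexHull_min ?_ hconv hx
  rintro _ (⟨k, rfl⟩ | ⟨k, rfl⟩) <;>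
    simp only [Set.mem_ofPred_eq, AffineMap.coe_add, Pi.add_apply, b.coord_apply, coord_oppVert]
  · split_ifs <;> norm_num
  · split_ifs with hik hjk
    · exact absurd (hik.trans hjk.symm) hij
    all_goals norm_num

theorem convexHull_range_union_oppVert_subset :
    convexHull ℝ (Set.range b ∪ Set.range (oppVert b)) ⊆
      convexHull ℝ (Set.range b) ∪ ⋃ i, cornerTet b i := by
  intro x hx
  by_cases hnonneg : ∀ i, 0 ≤ b.coord i x
  · exact Or.inl (b.convexHull_eq_nonneg_coord ▸ hnonneg)
  · push Not at hnonneg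
    obtain ⟨i, hi⟩ := hnonneg
    refine Or.inr (Set.mem_iUnion.2 ⟨i, ?_⟩)
    rw [← b.linear_combination_coord_eq_self x]
    exact sum_smul_mem_cornerTet b (b.sum_coord_apply_eq_one x) hi.le
      fun j hji => coord_add_coord_nonneg_of_mem_convexHull b hx hji

end AffineBasis

theorem convexHull_union_iUnion_cornerTet_subset (p : Fin 4 → Fin 3 → ℝ) :
    convexHull ℝ (Set.range p) ∪ ⋃ i, cornerTet p i ⊆
      convexHull ℝ (Set.range p ∪ Set.range (oppVert p)) := by
  refine Set.union_subset (convexHull_mono Set.subset_union_left) (Set.iUnion_subset fun i => ?_)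
  refine convexHull_mono ?_
  rintro _ (rfl | ⟨j, -, rfl⟩)
  exacts [Or.inr ⟨i, rfl⟩, Or.inl ⟨j, rfl⟩]

/-- The circumscribed parallelepiped `C(T) = conv(p₁,…,p₄,q₁,…,q₄)` is the union
of the tetrahedron `T` and the four corner tetrahedra. -/
theorem circumscribed_parallelepiped_decomposition
    (p : Fin 4 → Fin 3 → ℝ) (hp : AffineIndependent ℝ p) :
    convexHull ℝ (Set.range p ∪ Set.range (oppVert p)) =
      convexHull ℝ (Set.range p) ∪ ⋃ i : Fin 4, cornerTet p i := by
  have hspan : affineSpan ℝ (Set.range p) = ⊤ := by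
    rw [hp.affineSpan_eq_top_iff_card_eq_finrank_add_one]
    simp
  exact (convexHull_range_union_oppVert_subset ⟨p, hp, hspan⟩).antisymm
    (convexHull_union_iUnion_cornerTet_subset p)
end
end

section
/- Let P, Q ⊂ ℝ^d be lattice polytopes. If the Cayley sum Cay(P,Q) ⊂ ℝ^{d+1} is IDP, then the pair (P,Q) is IDP, i.e., (P+Q) ∩ ℤ^d = (P ∩ ℤ^d) + (Q ∩ ℤ^d). -/
open scoped Pointwise

noncomputable section

/-- The real point corresponding to an integer point of `ℤ^d`. -/
def toRd {d : ℕ} (v : Fin d → ℤ) : Fin d → ℝ := fun i => (v i : ℝ)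

/-- The set of lattice points of `ℝ^d`. -/
def LatD (d : ℕ) : Set (Fin d → ℝ) := Set.range (toRd (d := d))

/-- A lattice polytope in `ℝ^d`: the convex hull of a nonempty finite set of
lattice points. -/
def IsLatticePolytopeD {d : ℕ} (P : Set (Fin d → ℝ)) : Prop :=
  ∃ V : Finset (Fin d → ℤ), V.Nonempty ∧ P = convexHull ℝ (toRd '' ↑V)

/-- A lattice polytope is IDP if every lattice point of `nP` is a sum of `n`
lattice points of `P`, for every positive integer `n`. -/
def IsIDP {d : ℕ} (R : Set (Fin d → ℝ)) : Prop :=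
  ∀ n : ℕ, 0 < n → ∀ z : Fin d → ℤ, toRd z ∈ (n : ℝ) • R →
    ∃ f : Fin n → Fin d → ℤ, (∀ i, toRd (f i) ∈ R) ∧ z = ∑ i, f i

/-- The Cayley sum `Cay(P,Q) = conv(P×{0} ∪ Q×{1}) ⊆ ℝ^{d+1}`. -/
def cayD {d : ℕ} (P Q : Set (Fin d → ℝ)) : Set (Fin (d + 1) → ℝ) :=
  convexHull ℝ
    ((fun x => Fin.snoc x (0:ℝ)) '' P ∪ (fun x => Fin.snoc x (1:ℝ)) '' Q)

lemma toRd_add {d : ℕ} (a b : Fin d → ℤ) : toRd (a + b) = toRd a + toRd b := by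
  funext i; simp [toRd]

lemma toRd_snoc {d : ℕ} (v : Fin d → ℤ) (t : ℤ) :
    toRd (Fin.snoc v t) = Fin.snoc (toRd v) (t : ℝ) := by
  funext i
  refine Fin.lastCases ?_ ?_ i <;> simp [toRd]

lemma toRd_init {d : ℕ} (g : Fin (d+1) → ℤ) :
    toRd (Fin.init g) = Fin.init (toRd g) := rfl

/-- Affine map `x ↦ (x, t)`. -/
def snocAff (d : ℕ) (t : ℝ) : (Fin d → ℝ) →ᵃ[ℝ] (Fin (d+1) → ℝ) where
  toFun x := Fin.snoc x t
  linear :=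
    { toFun := fun x => Fin.snoc x 0
      map_add' := by
        intro x y; funext i; refine Fin.lastCases ?_ ?_ i <;> simp
      map_smul' := by
        intro c x; funext i; refine Fin.lastCases ?_ ?_ i <;> simp }
  map_vadd' := by
    intro p v; funext i; refine Fin.lastCases ?_ ?_ i <;>
      simp [Fin.snoc_last, Fin.snoc_castSucc]

lemma caySlice {d : ℕ} {A B : Set (Fin (d+1) → ℝ)}
    (hA : ∀ y ∈ A, y (Fin.last d) = 0) (hB : ∀ y ∈ B, y (Fin.last d) = 1)
    {x : Fin (d+1) → ℝ} (hx : x ∈ convexHull ℝ (A ∪ B)) :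
    (0 ≤ x (Fin.last d) ∧ x (Fin.last d) ≤ 1) ∧
    (x (Fin.last d) = 0 → x ∈ convexHull ℝ A) ∧
    (x (Fin.last d) = 1 → x ∈ convexHull ℝ B) := by
  classical
  rw [convexHull_eq] at hx
  obtain ⟨ι, t, w, z, hw₀, hw₁, hz, hcm⟩ := hx
  have hxsum : x = ∑ i ∈ t, w i • z i := by
    rw [← hcm, Finset.centerMass_eq_of_sum_1 _ _ hw₁]
  have h01 : ∀ i ∈ t, z i (Fin.last d) = 0 ∨ z i (Fin.last d) = 1 := by
    intro i hi
    rcases hz i hi with h | h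
    · exact Or.inl (hA _ h)
    · exact Or.inr (hB _ h)
  have hxlast : x (Fin.last d) = ∑ i ∈ t, w i * z i (Fin.last d) := by
    rw [hxsum]; simp [Finset.sum_apply]
  have hterm0 : ∀ i ∈ t, 0 ≤ w i * z i (Fin.last d) := by
    intro i hi
    rcases h01 i hi with h | h <;> simp [h]
    exact hw₀ i hi
  have hterm1 : ∀ i ∈ t, w i * z i (Fin.last d) ≤ w i := by
    intro i hi
    rcases h01 i hi with h | h
    · rw [h, mul_zero]; exact hw₀ i hi
    · rw [h, mul_one]
  refine ⟨⟨hxlast ▸ Finset.sum_nonneg hterm0,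
    by rw [hxlast]; calc ∑ i ∈ t, w i * z i (Fin.last d) ≤ ∑ i ∈ t, w i :=
          Finset.sum_le_sum hterm1
      _ = 1 := hw₁⟩, ?_, ?_⟩
  · intro h0
    have hzero : ∀ i ∈ t, w i ≠ 0 → z i ∈ A := by
      intro i hi hwi
      have := (Finset.sum_eq_zero_iff_of_nonneg hterm0).mp (by rw [← hxlast, h0]) i hi
      have hzi : z i (Fin.last d) = 0 := by
        rcases h01 i hi with h | h
        · exact h
        · exfalso; rw [h, mul_one] at this; exact hwi this
      rcases hz i hi with h | h
      · exact h
      · exact absurd (hB _ h) (by rw [hzi]; norm_num)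
    rw [← hcm, ← Finset.centerMass_filter_ne_zero]
    refine Finset.centerMass_mem_convexHull _ (fun i hi => hw₀ i (Finset.mem_filter.mp hi).1)
      ?_ (fun i hi => hzero i (Finset.mem_filter.mp hi).1 (Finset.mem_filter.mp hi).2)
    rw [Finset.sum_filter_ne_zero, hw₁]; norm_num
  · intro h1
    have hzero : ∀ i ∈ t, w i ≠ 0 → z i ∈ B := by
      intro i hi hwi
      have hsum0 : ∑ i ∈ t, w i * (1 - z i (Fin.last d)) = 0 := by
        simp only [mul_sub, mul_one, Finset.sum_sub_distrib, hw₁, ← hxlast, h1, sub_self]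
      have hnn : ∀ i ∈ t, 0 ≤ w i * (1 - z i (Fin.last d)) := by
        intro i hi
        have := hterm1 i hi
        nlinarith [hterm0 i hi, hw₀ i hi]
      have := (Finset.sum_eq_zero_iff_of_nonneg hnn).mp hsum0 i hi
      have hzi : z i (Fin.last d) = 1 := by
        rcases h01 i hi with h | h
        · exfalso; rw [h] at this; simp at this; exact hwi this
        · exact h
      rcases hz i hi with h | h
      · exact absurd (hA _ h) (by rw [hzi]; norm_num)
      · exact h
    rw [← hcm, ← Finset.centerMass_filter_ne_zero]
    refine Finset.centerMass_mem_convexHull _ (fun i hi => hw₀ i (Finset.mem_filter.mp hi).1)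
      ?_ (fun i hi => hzero i (Finset.mem_filter.mp hi).1 (Finset.mem_filter.mp hi).2)
    rw [Finset.sum_filter_ne_zero, hw₁]; norm_num

lemma extract_pt {d : ℕ} {P : Set (Fin d → ℝ)} (hPc : Convex ℝ P) (t : ℝ)
    {g : Fin (d+1) → ℤ} (hg : toRd g ∈ convexHull ℝ ((fun x => Fin.snoc x t) '' P)) :
    toRd (Fin.init g) ∈ P := by
  have himg : (fun x => Fin.snoc x t) '' P = ⇑(snocAff d t) '' P := rfl
  rw [himg, ← AffineMap.image_convexHull, hPc.convexHull_eq] at hg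
  obtain ⟨p, hp, hpe⟩ := hg
  have : toRd (Fin.init g) = p := by
    rw [toRd_init, ← hpe]
    funext i
    simp [snocAff, Fin.init]
  rw [this]; exact hp

/-- If the Cayley sum `Cay(P,Q)` is IDP, then the pair `(P,Q)` is IDP:
`(P+Q) ∩ ℤ^d = (P ∩ ℤ^d) + (Q ∩ ℤ^d)`. -/
theorem cayley_IDP_implies_pair_IDP (d : ℕ)
    (P Q : Set (Fin d → ℝ))
    (hP : IsLatticePolytopeD P) (hQ : IsLatticePolytopeD Q)
    (h : IsIDP (cayD P Q)) :
    (P + Q) ∩ LatD d = (P ∩ LatD d) + (Q ∩ LatD d) := by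
  obtain ⟨VP, -, hPe⟩ := hP
  obtain ⟨VQ, -, hQe⟩ := hQ
  have hPc : Convex ℝ P := hPe ▸ convex_convexHull ℝ _
  have hQc : Convex ℝ Q := hQe ▸ convex_convexHull ℝ _
  set A : Set (Fin (d+1) → ℝ) := (fun x => Fin.snoc x (0:ℝ)) '' P with hA
  set B : Set (Fin (d+1) → ℝ) := (fun x => Fin.snoc x (1:ℝ)) '' Q with hB
  have hA0 : ∀ y ∈ A, y (Fin.last d) = 0 := by
    rintro y ⟨p, hp, rfl⟩; simp
  have hB1 : ∀ y ∈ B, y (Fin.last d) = 1 := by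
    rintro y ⟨q, hq, rfl⟩; simp
  apply Set.Subset.antisymm
  · rintro z ⟨hzPQ, v, rfl⟩
    rw [Set.mem_add] at hzPQ
    obtain ⟨p, hp, q, hq, hpq⟩ := hzPQ
    -- the lattice point (v, 1) lies in 2 • Cay(P,Q)
    have hmem : toRd (Fin.snoc v (1:ℤ)) ∈ (2:ℝ) • cayD P Q := by
      have h2 : (2:ℝ) • cayD P Q = cayD P Q + cayD P Q := by
        have := (convex_convexHull ℝ (A ∪ B)).add_smul (zero_le_one) (zero_le_one)
        norm_num at this
        simpa [cayD] using this
      rw [h2]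
      have hmp : Fin.snoc p (0:ℝ) ∈ cayD P Q :=
        subset_convexHull ℝ _ (Or.inl ⟨p, hp, rfl⟩)
      have hmq : Fin.snoc q (1:ℝ) ∈ cayD P Q :=
        subset_convexHull ℝ _ (Or.inr ⟨q, hq, rfl⟩)
      have heq : toRd (Fin.snoc v (1:ℤ)) = Fin.snoc p (0:ℝ) + Fin.snoc q (1:ℝ) := by
        rw [toRd_snoc]
        funext i
        refine Fin.lastCases ?_ ?_ i
        · simp
        · intro i
          simp [← hpq]
      rw [heq]
      exact Set.add_mem_add hmp hmq
    obtain ⟨f, hf, hsum⟩ := h 2 two_pos (Fin.snoc v (1:ℤ)) hmem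
    rw [Fin.sum_univ_two] at hsum
    -- the last coordinates of f 0 and f 1
    have hlast : f 0 (Fin.last d) + f 1 (Fin.last d) = 1 := by
      have := congrFun hsum (Fin.last d)
      simpa using this.symm
    have hbnd : ∀ i, (0:ℤ) ≤ f i (Fin.last d) ∧ f i (Fin.last d) ≤ 1 := by
      intro i
      have this' : (0:ℝ) ≤ ((f i (Fin.last d)):ℝ) ∧ ((f i (Fin.last d)):ℝ) ≤ 1 :=
        (caySlice hA0 hB1 (hf i)).1
      exact ⟨by exact_mod_cast this'.1, by exact_mod_cast this'.2⟩
    have hcases : (f 0 (Fin.last d) = 0 ∧ f 1 (Fin.last d) = 1) ∨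
        (f 0 (Fin.last d) = 1 ∧ f 1 (Fin.last d) = 0) := by
      have h0 := hbnd 0
      have h1 := hbnd 1
      omega
    have hinit : v = Fin.init (f 0) + Fin.init (f 1) := by
      funext i
      simpa [Fin.init] using congrFun hsum i.castSucc
    have key : ∀ g₀ g₁ : Fin (d+1) → ℤ, toRd g₀ ∈ cayD P Q → toRd g₁ ∈ cayD P Q →
        g₀ (Fin.last d) = 0 → g₁ (Fin.last d) = 1 →
        toRd (Fin.init g₀) + toRd (Fin.init g₁) ∈ (P ∩ LatD d) + (Q ∩ LatD d) := by
      intro g₀ g₁ hg₀ hg₁ h₀ h₁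
      have hm0 : toRd g₀ ∈ convexHull ℝ A :=
        (caySlice hA0 hB1 hg₀).2.1 (by simp [toRd, h₀])
      have hm1 : toRd g₁ ∈ convexHull ℝ B :=
        (caySlice hA0 hB1 hg₁).2.2 (by simp [toRd, h₁])
      exact Set.add_mem_add ⟨extract_pt hPc 0 hm0, ⟨_, rfl⟩⟩
        ⟨extract_pt hQc 1 hm1, ⟨_, rfl⟩⟩
    rcases hcases with ⟨h0, h1⟩ | ⟨h0, h1⟩
    · have := key (f 0) (f 1) (hf 0) (hf 1) h0 h1
      rwa [hinit, toRd_add]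
    · have := key (f 1) (f 0) (hf 1) (hf 0) h1 h0
      rw [hinit, toRd_add, add_comm (toRd (Fin.init (f 0)))]
      exact this
  · rintro z ⟨x, ⟨hxP, vx, rfl⟩, y, ⟨hyQ, vy, rfl⟩, rfl⟩
    exact ⟨Set.add_mem_add hxP hyQ, vx + vy, toRd_add vx vy⟩
end
end

section
/- Let T ⊂ ℝ^3 be an empty lattice tetrahedron that is not unimodular. Then the pair (T,T) is not IDP: there is a lattice point in 2T ∩ ℤ^3 that is not the sum of two points of T ∩ ℤ^3. -/
/-!
The edge vectors `bₖ = p (k+1) - p 0` span a sublattice `L` of `ℤ³` of index `|det|`, so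
non-unimodularity gives a lattice point outside `L`; reducing it modulo `L` yields a lattice point
`u = ∑ λₖ bₖ ∉ L` with `0 ≤ λₖ < 1`. If `∑ λₖ ≤ 2` then `2 p 0 + u ∈ 2T`; otherwise
`∑ (1 - λₖ) < 1` and `2 p 0 + (∑ bₖ - u) ∈ 2T`. Since `T` is empty, a sum of two of its lattice
points is a sum of two vertices, hence congruent to `2 p 0` modulo `L`, which the chosen point
is not.
-/

open scoped Pointwise

noncomputable section

/-- An empty lattice tetrahedron: four affinely independent lattice points whose
convex hull contains no lattice points other than its vertices. -/
def EmptyLatticeTet (p : Fin 4 → Fin 3 → ℤ) : Prop :=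
  AffineIndependent ℝ (fun i => toR3 (p i)) ∧
  ∀ z : Fin 3 → ℤ,
    toR3 z ∈ convexHull ℝ (Set.range fun i => toR3 (p i)) → ∃ i, z = p i

theorem Matrix.exists_notMem_span_range_of_not_isUnit_det {m R : Type*} [Fintype m]
    [DecidableEq m] [CommRing R] {M : Matrix m m R} (h : ¬IsUnit M.det) :
    ∃ t : m → R, t ∉ Submodule.span R (Set.range M) := by
  by_contra! hspan
  refine h (M.isUnit_iff_isUnit_det.mp (vecMul_surjective_iff_isUnit.mp fun t => ?_))
  have ht : t ∈ LinearMap.range M.vecMulLinear := by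
    rw [range_vecMulLinear]
    exact hspan t
  exact ht

theorem AffineIndependent.linearIndependent_succ_sub {k V : Type*} [Ring k] [AddCommGroup V]
    [Module k V] {n : ℕ} {p : Fin (n + 1) → V} (h : AffineIndependent k p) :
    LinearIndependent k fun i : Fin n => p i.succ - p 0 :=
  ((affineIndependent_iff_linearIndependent_vsub k p 0).mp h).comp
    (fun i => ⟨i.succ, i.succ_ne_zero⟩)
    fun _ _ hij => Fin.succ_injective _ (congrArg Subtype.val hij)

theorem smul_add_sum_smul_sub_mem_smul_convexHull {V : Type*} [AddCommGroup V] [Module ℝ V]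
    {n : ℕ} (P : Fin (n + 1) → V) {c : ℝ} (hc : 0 < c) {w : Fin n → ℝ} (hw : ∀ k, 0 ≤ w k)
    (hsum : ∑ k, w k ≤ c) :
    c • P 0 + ∑ k, w k • (P k.succ - P 0) ∈ c • convexHull ℝ (Set.range P) := by
  set μ : Fin (n + 1) → ℝ := Fin.cons (1 - (∑ k, w k) / c) fun k => w k / c
  have hμ0 : ∀ i, 0 ≤ μ i := by
    refine Fin.cases ?_ fun k => ?_
    · simpa [μ] using div_le_one_of_le₀ hsum hc.le
    · simpa [μ] using div_nonneg (hw k) hc.le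
  have hμ1 : ∑ i, μ i = 1 := by simp [μ, Fin.sum_univ_succ, Finset.sum_div]
  refine ⟨∑ i, μ i • P i, (convex_convexHull ℝ _).sum_mem (fun i _ => hμ0 i) hμ1
    fun i _ => subset_convexHull ℝ _ (Set.mem_range_self i), ?_⟩
  simp only [Fin.sum_univ_succ, μ, Fin.cons_zero, Fin.cons_succ, smul_add, Finset.smul_sum,
    smul_smul, mul_div_cancel₀ _ hc.ne', smul_sub, Finset.sum_sub_distrib, ← Finset.sum_smul,
    mul_one, sub_smul]
  abel

section EdgeLattice

variable {G : Type*} [AddCommGroup G] {n : ℕ} (p : Fin (n + 1) → G)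

def edgeLattice : Submodule ℤ G :=
  Submodule.span ℤ (Set.range fun k : Fin n => p k.succ - p 0)

theorem sub_mem_edgeLattice (i : Fin (n + 1)) : p i - p 0 ∈ edgeLattice p := by
  cases i using Fin.cases with
  | zero => simp
  | succ k => exact Submodule.subset_span (Set.mem_range_self k)

theorem add_sub_two_smul_mem_edgeLattice (i j : Fin (n + 1)) :
    p i + p j - (2 : ℤ) • p 0 ∈ edgeLattice p := by
  have h := add_mem (sub_mem_edgeLattice p i) (sub_mem_edgeLattice p j)
  rwa [sub_add_sub_comm, ← two_zsmul] at h

end EdgeLattice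

theorem exists_reduction_to_half_open_parallelepiped {M V ι : Type*} [AddCommGroup M]
    [AddCommGroup V] [Module ℝ V] [FiniteDimensional ℝ V] [Fintype ι] (f : M →+ V) {b : ι → M}
    (hb : LinearIndependent ℝ (f ∘ b)) (hcard : Fintype.card ι = Module.finrank ℝ V) (t : M) :
    ∃ s : M, t - s ∈ Submodule.span ℤ (Set.range b) ∧
      ∃ lam : ι → ℝ, (∀ k, lam k ∈ Set.Ico 0 1) ∧ f s = ∑ k, lam k • f (b k) := by
  obtain ⟨B, hB⟩ : ∃ B : Module.Basis ι ℝ V, ⇑B = f ∘ b :=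
    ⟨_, coe_basisOfLinearIndependentOfCardEqFinrank' _ hb hcard⟩
  set c := B.repr (f t)
  refine ⟨t - ∑ k, ⌊c k⌋ • b k, ?_, fun k => Int.fract (c k),
    fun k => ⟨Int.fract_nonneg _, Int.fract_lt_one _⟩, ?_⟩
  · simpa using Submodule.sum_mem _ fun k _ =>
      Submodule.smul_mem _ _ (Submodule.subset_span (Set.mem_range_self k))
  · have hft : ∑ k, c k • f (b k) = f t := by
      simpa [hB] using B.sum_repr (f t)
    calc f (t - ∑ k, ⌊c k⌋ • b k) = f t - ∑ k, (⌊c k⌋ : ℝ) • f (b k) := by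
          simp [Int.cast_smul_eq_zsmul]
      _ = ∑ k, Int.fract (c k) • f (b k) := by
          simp only [← hft, ← Finset.sum_sub_distrib, ← sub_smul, Int.fract]

theorem exists_non_IDP_witness_of_notMem_edgeLattice {M V : Type*} [AddCommGroup M]
    [AddCommGroup V] [Module ℝ V] {n : ℕ} (f : M →+ V) {p : Fin (n + 1) → M}
    (hLat : ∀ z, f z ∈ convexHull ℝ (Set.range fun i => f (p i)) → ∃ i, z = p i)
    {u : M} (hu : u ∉ edgeLattice p) {w : Fin n → ℝ} (hw : ∀ k, 0 ≤ w k) (hsum : ∑ k, w k ≤ 2)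
    (huw : f u = ∑ k, w k • f (p k.succ - p 0)) :
    ∃ z, f z ∈ (2 : ℝ) • convexHull ℝ (Set.range fun i => f (p i)) ∧
      ¬ ∃ x y, f x ∈ convexHull ℝ (Set.range fun i => f (p i)) ∧
        f y ∈ convexHull ℝ (Set.range fun i => f (p i)) ∧ z = x + y := by
  refine ⟨(2 : ℤ) • p 0 + u, ?_, ?_⟩
  · convert smul_add_sum_smul_sub_mem_smul_convexHull (fun i => f (p i)) two_pos hw hsum using 1
    simp [huw, two_smul]
  · rintro ⟨x, y, hx, hy, hxy⟩
    obtain ⟨i, rfl⟩ := hLat x hx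
    obtain ⟨j, rfl⟩ := hLat y hy
    exact hu (by simpa [← hxy] using add_sub_two_smul_mem_edgeLattice p i j)

theorem exists_non_IDP_witness_of_mem_parallelepiped {M V : Type*} [AddCommGroup M]
    [AddCommGroup V] [Module ℝ V] {n : ℕ} (hn : n ≤ 4) (f : M →+ V) {p : Fin (n + 1) → M}
    (hLat : ∀ z, f z ∈ convexHull ℝ (Set.range fun i => f (p i)) → ∃ i, z = p i)
    {u : M} (hu : u ∉ edgeLattice p) {lam : Fin n → ℝ} (hlam : ∀ k, lam k ∈ Set.Ico 0 1)
    (hulam : f u = ∑ k, lam k • f (p k.succ - p 0)) :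
    ∃ z, f z ∈ (2 : ℝ) • convexHull ℝ (Set.range fun i => f (p i)) ∧
      ¬ ∃ x y, f x ∈ convexHull ℝ (Set.range fun i => f (p i)) ∧
        f y ∈ convexHull ℝ (Set.range fun i => f (p i)) ∧ z = x + y := by
  rcases le_or_gt (∑ k, lam k) 2 with hle | hgt
  · exact exists_non_IDP_witness_of_notMem_edgeLattice f hLat hu (fun k => (hlam k).1) hle hulam
  · have hbL : ∑ k : Fin n, (p k.succ - p 0) ∈ edgeLattice p :=
      sum_mem fun k _ => sub_mem_edgeLattice p (Fin.succ k)
    refine exists_non_IDP_witness_of_notMem_edgeLattice f hLat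
      (u := ∑ k : Fin n, (p k.succ - p 0) - u) (w := fun k => 1 - lam k) (fun h => hu ?_) (fun k => by linarith [(hlam k).2]) ?_ ?_
    · simpa using sub_mem hbL h
    · have hn' : (n : ℝ) ≤ 4 := by exact_mod_cast hn
      simp only [Finset.sum_sub_distrib, Finset.sum_const, Finset.card_univ, Fintype.card_fin,
        nsmul_eq_mul, mul_one]
      linarith
    · simp [hulam, sub_smul, Finset.sum_sub_distrib]

/-- If `T` is an empty lattice tetrahedron which is not unimodular, then the
pair `(T,T)` is not IDP: there is a lattice point of `2T` which is not a sum of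
two lattice points of `T`. -/
theorem empty_non_unimodular_tet_not_IDP
    (p : Fin 4 → Fin 3 → ℤ)
    (hEmpty : EmptyLatticeTet p)
    (hNotUni : (Matrix.of ![p 1 - p 0, p 2 - p 0, p 3 - p 0]).det ∉ ({1, -1} : Set ℤ)) :
    ∃ z : Fin 3 → ℤ,
      toR3 z ∈ (2:ℝ) • convexHull ℝ (Set.range fun i => toR3 (p i)) ∧
      ¬ ∃ x y : Fin 3 → ℤ,
          toR3 x ∈ convexHull ℝ (Set.range fun i => toR3 (p i)) ∧
          toR3 y ∈ convexHull ℝ (Set.range fun i => toR3 (p i)) ∧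
          z = x + y := by
  obtain ⟨hAff, hLat⟩ := hEmpty
  let f : (Fin 3 → ℤ) →+ (Fin 3 → ℝ) := AddMonoidHom.compLeft (Int.castAddHom ℝ) (Fin 3)
  set b : Fin 3 → Fin 3 → ℤ := fun k => p k.succ - p 0
  have hdet : ¬IsUnit (Matrix.of b).det := by
    have hrows : Matrix.of ![p 1 - p 0, p 2 - p 0, p 3 - p 0] = Matrix.of b := by
      ext i : 1; fin_cases i <;> rfl
    rwa [Int.isUnit_iff, ← hrows]
  obtain ⟨t, ht⟩ : ∃ t, t ∉ edgeLattice p := Matrix.exists_notMem_span_range_of_not_isUnit_det hdet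
  have hb : LinearIndependent ℝ (f ∘ b) := by
    have hfb : ⇑f ∘ b = fun k => toR3 (p k.succ) - toR3 (p 0) := by
      ext k i
      simp [f, b, toR3]
    rw [hfb]
    exact hAff.linearIndependent_succ_sub
  obtain ⟨s, hts, lam, hlam, hs⟩ := exists_reduction_to_half_open_parallelepiped f hb (by simp) t
  have hsL : s ∉ edgeLattice p := fun hs =>
    ht (by simpa using add_mem (show t - s ∈ edgeLattice p from hts) hs)
  exact exists_non_IDP_witness_of_mem_parallelepiped (by norm_num) f hLat hsL hlam hs
end
end
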